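/- arXiv:1307.2114 — 4 statements merged into one kernel-verified Lean document; each statement's English description precedes it below -/
import Mathlib

section
/- For any natural number b ≥ 2, the sum over l from 1 to b-1 of cot²(lπ/(2b-1)) equals (2b-3)(b-1)/3. -/
/-!
By de Moivre, `sin ((2m+1)θ) = sin θ ^ (2m+1) · P(cot² θ)` for an explicit polynomial `P` of
degree `m` with leading coefficient `2m+1` and next coefficient `-C(2m+1, 3)`. The `m` distinct
numbers `cot² (lπ/(2m+1))`, `1 ≤ l ≤ m`, are therefore all the roots of `P`, and Vieta gives
their sum as `C(2m+1, 3)/(2m+1) = m(2m-1)/3`; the theorem is the case `m = b - 1`.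
-/

open Finset Polynomial Real

theorem Finset.sum_range_two_mul {M : Type*} [AddCommMonoid M] (f : ℕ → M) (n : ℕ) :
    ∑ i ∈ range (2 * n), f i = ∑ i ∈ range n, (f (2 * i) + f (2 * i + 1)) := by
  induction n with
  | zero => simp
  | succ n ih => rw [Nat.mul_succ, sum_range_succ, sum_range_succ, sum_range_succ, ih, add_assoc]

theorem Nat.cast_choose_three {K : Type*} [Field K] [CharZero K] (n : ℕ) :
    (n.choose 3 : K) = n * (n - 1) * (n - 2) / 6 := by
  rw [Nat.cast_choose_eq_descPochhammer_div]
  simp [descPochhammer_succ_right, Nat.factorial]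

lemma Complex.I_pow_two_mul (k : ℕ) : Complex.I ^ (2 * k) = (-1) ^ k := by
  rw [pow_mul, Complex.I_sq]

noncomputable def cotPoly (m : ℕ) : ℝ[X] :=
  ∑ k ∈ range (m + 1), C ((-1) ^ (m - k) * ((2 * m + 1).choose (2 * k) : ℝ)) * X ^ k

open Complex in
lemma cotPoly_eval_sq (m : ℕ) (x : ℝ) : (cotPoly m).eval (x ^ 2) = ((x + I) ^ (2 * m + 1)).im := by
  rw [add_pow, show 2 * m + 1 + 1 = 2 * (m + 1) by ring, sum_range_two_mul, im_sum, cotPoly,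
    eval_finsetSum]
  refine sum_congr rfl fun k hk => ?_
  have hkm : k ≤ m := Nat.lt_succ_iff.mp (mem_range.mp hk)
  rw [show 2 * m + 1 - 2 * k = 2 * (m - k) + 1 by omega,
    show 2 * m + 1 - (2 * k + 1) = 2 * (m - k) by omega, pow_succ I, I_pow_two_mul,
    show (-1 : ℂ) ^ (m - k) = ((-1 : ℝ) ^ (m - k) : ℝ) by push_cast; rfl]
  simp [mul_im, mul_re, pow_mul, ← ofReal_pow, ← ofReal_mul]
  ring

open Complex in
lemma Real.sin_two_mul_add_one_mul (m : ℕ) {θ : ℝ} (hθ : Real.sin θ ≠ 0) :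
    Real.sin ((2 * m + 1) * θ) = Real.sin θ ^ (2 * m + 1) * (cotPoly m).eval (Real.cot θ ^ 2) := by
  have hθ' : Complex.sin θ ≠ 0 := by exact_mod_cast hθ
  have hcot : Complex.sin θ * (Real.cot θ + I) = Complex.cos θ + Complex.sin θ * I := by
    rw [ofReal_cot, Complex.cot_eq_cos_div_sin]; field_simp
  have hmoivre := congrArg im (cos_add_sin_mul_I_pow (2 * m + 1) θ)
  rw [← hcot, mul_pow, ← ofReal_sin, ← ofReal_pow, im_ofReal_mul, ← ofReal_natCast,
    ← ofReal_mul, ← ofReal_cos, ← ofReal_sin, add_im, mul_I_im, ofReal_im, ofReal_re,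
    zero_add] at hmoivre
  rw [cotPoly_eval_sq, hmoivre]
  push_cast; rfl

lemma cotPoly_coeff (m j : ℕ) :
    (cotPoly m).coeff j = if j ≤ m then (-1) ^ (m - j) * ((2 * m + 1).choose (2 * j) : ℝ) else 0 := by
  simp only [cotPoly, finsetSum_coeff, coeff_C_mul_X_pow, sum_ite_eq, mem_range, Nat.lt_succ_iff]

lemma cotPoly_coeff_self (m : ℕ) : (cotPoly m).coeff m = 2 * m + 1 := by
  rw [cotPoly_coeff, if_pos le_rfl, Nat.sub_self, pow_zero, one_mul,
    Nat.choose_symm_of_eq_add (by ring : 2 * m + 1 = 2 * m + 1), Nat.choose_one_right]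
  push_cast; ring

lemma cotPoly_natDegree (m : ℕ) : (cotPoly m).natDegree = m := by
  refine natDegree_eq_of_le_of_coeff_ne_zero ?_ ?_
  · exact natDegree_le_iff_coeff_eq_zero.mpr fun j hj => by
      rw [cotPoly_coeff, if_neg (by exact_mod_cast hj.not_ge)]
  · rw [cotPoly_coeff_self]; positivity

lemma cotPoly_leadingCoeff (m : ℕ) : (cotPoly m).leadingCoeff = 2 * m + 1 := by
  rw [leadingCoeff, cotPoly_natDegree, cotPoly_coeff_self]

lemma cotPoly_nextCoeff (m : ℕ) : (cotPoly m).nextCoeff = -((2 * m + 1).choose 3 : ℝ) := by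
  rcases m with _ | m
  · simp [nextCoeff, cotPoly_natDegree, Nat.choose_eq_zero_iff]
  · rw [nextCoeff_of_natDegree_pos (by rw [cotPoly_natDegree]; omega), cotPoly_natDegree,
      cotPoly_coeff, if_pos (by omega), show m + 1 - (m + 1 - 1) = 1 by omega,
      Nat.choose_symm_of_eq_add (by omega : 2 * (m + 1) + 1 = 2 * (m + 1 - 1) + 3)]
    ring

lemma Real.cot_pos_of_mem_Ioo {θ : ℝ} (hθ : θ ∈ Set.Ioo 0 (π / 2)) : 0 < Real.cot θ := by
  rw [Real.cot_eq_cos_div_sin]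
  exact div_pos (cos_pos_of_mem_Ioo ⟨by linarith [hθ.1, pi_pos], hθ.2⟩)
    (sin_pos_of_pos_of_lt_pi hθ.1 (by linarith [hθ.2, pi_pos]))

lemma Real.injOn_cot_sq : Set.InjOn (fun θ => Real.cot θ ^ 2) (Set.Ioo 0 (π / 2)) := by
  intro a ha b hb hab
  have hcot : Real.cot a = Real.cot b :=
    (pow_left_inj₀ (cot_pos_of_mem_Ioo ha).le (cot_pos_of_mem_Ioo hb).le two_ne_zero).mp hab
  refine injOn_tan ⟨by linarith [ha.1, pi_pos], ha.2⟩ ⟨by linarith [hb.1, pi_pos], hb.2⟩ ?_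
  rw [← cot_inv_eq_tan, ← cot_inv_eq_tan, hcot]

lemma mul_pi_div_two_mul_add_one_mem_Ioo {m l : ℕ} (hl : l ∈ Icc 1 m) :
    (l : ℝ) * π / (2 * m + 1) ∈ Set.Ioo 0 (π / 2) := by
  obtain ⟨h1, h2⟩ := mem_Icc.mp hl
  have h1 : (1 : ℝ) ≤ l := by exact_mod_cast h1
  have h2 : (l : ℝ) ≤ m := by exact_mod_cast h2
  constructor
  · positivity
  · rw [div_lt_iff₀ (by positivity)]; nlinarith [pi_pos]

lemma cotPoly_eval_cot_sq_mul_pi_div {m l : ℕ} (hl : l ∈ Icc 1 m) :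
    (cotPoly m).eval (Real.cot (l * π / (2 * m + 1)) ^ 2) = 0 := by
  have hsin : 0 < Real.sin (l * π / (2 * m + 1)) := by
    obtain ⟨h0, hπ⟩ := mul_pi_div_two_mul_add_one_mem_Ioo hl
    exact sin_pos_of_pos_of_lt_pi h0 (by linarith [pi_pos])
  have h := sin_two_mul_add_one_mul m hsin.ne'
  rw [show (2 * m + 1) * (l * π / (2 * m + 1)) = l * π by field_simp, sin_nat_mul_pi] at h
  exact (mul_eq_zero.mp h.symm).resolve_left (pow_pos hsin _).ne'

lemma cotPoly_roots (m : ℕ) :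
    (cotPoly m).roots = (Icc 1 m).val.map fun l : ℕ => Real.cot (l * π / (2 * m + 1)) ^ 2 := by
  have hinj : Set.InjOn (fun l : ℕ => Real.cot (l * π / (2 * m + 1)) ^ 2) (Icc 1 m) :=
    injOn_cot_sq.comp (fun l _ k _ h => by have := pi_pos; field_simp at h; exact_mod_cast h)
      fun l hl => mul_pi_div_two_mul_add_one_mem_Ioo hl
  rw [← image_val_of_injOn hinj]
  refine roots_eq_of_natDegree_le_card_of_ne_zero ?_ ?_ ?_
  · simpa only [mem_image, forall_exists_index, and_imp, forall_apply_eq_imp_iff₂]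
      using fun l hl => cotPoly_eval_cot_sq_mul_pi_div hl
  · rw [card_image_of_injOn hinj, cotPoly_natDegree]; simp
  · rw [← leadingCoeff_ne_zero, cotPoly_leadingCoeff]; positivity

theorem sum_cot_sq_mul_pi_div_two_mul_add_one (m : ℕ) :
    ∑ l ∈ Icc 1 m, Real.cot (l * π / (2 * m + 1)) ^ 2 = m * (2 * m - 1) / 3 := by
  have hsplit : (cotPoly m).Splits := by
    rw [splits_iff_card_roots, cotPoly_roots, cotPoly_natDegree]; simp
  have hvieta := hsplit.nextCoeff_eq_neg_sum_roots_mul_leadingCoeff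
  rw [cotPoly_nextCoeff, cotPoly_leadingCoeff, cotPoly_roots, sum_map_val,
    Nat.cast_choose_three] at hvieta
  push_cast at hvieta
  rw [eq_div_iff three_ne_zero]
  refine mul_left_cancel₀ (by positivity : (2 * m + 1 : ℝ) ≠ 0) ?_
  linarith

theorem cot_sq_sum_odd (b : ℕ) (hb : 2 ≤ b) :
    ∑ l ∈ Finset.Icc 1 (b - 1), (Real.cot ((l : ℝ) * Real.pi / (2 * b - 1))) ^ 2
      = (2 * (b : ℝ) - 3) * ((b : ℝ) - 1) / 3 := by
  obtain ⟨m, rfl⟩ : ∃ m, b = m + 1 := ⟨b - 1, by omega⟩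
  have hden : 2 * ((m + 1 : ℕ) : ℝ) - 1 = 2 * m + 1 := by push_cast; ring
  rw [Nat.add_sub_cancel, hden, sum_cot_sq_mul_pi_div_two_mul_add_one]
  push_cast
  ring
end

section
/- For any natural number b ≥ 2, the sum over l from 1 to b-1 of 1/sin²(lπ/b) equals (b²-1)/3. -/
/-!
If `z = exp (2 i t)` is a `b`-th root of unity other than `1`, then `(z - 1)² = -4 z sin² t`,
and summation by parts against the weights `j (b - j)`, whose second difference is constant,
gives `(z - 1)² ∑_{j<b} j (b - j) z ^ j = 2 b z`. So
`1 / sin² (l π / b) = -(2 / b) ∑_j j (b - j) ζ ^ (l j)` with `ζ = exp (2 π i / b)`. Summing over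
`1 ≤ l < b`, orthogonality of the powers of `ζ` leaves `(2 / b) ∑_j j (b - j) = (b² - 1) / 3`.
-/

open Finset Complex
open scoped Real

theorem sub_one_mul_sum_range_mul_pow {R : Type*} [CommRing R] (f : ℕ → R) (z : R) (n : ℕ) :
    (z - 1) * ∑ j ∈ range n, f j * z ^ j
      = f n * z ^ n - f 0 - z * ∑ j ∈ range n, (f (j + 1) - f j) * z ^ j := by
  induction n with
  | zero => simp
  | succ n ih => rw [sum_range_succ, sum_range_succ, mul_add, ih]; ring

theorem sub_one_mul_sum_range_id_mul_pow {R : Type*} [CommRing R] {z : R} {n : ℕ}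
    (hzn : z ^ n = 1) (hgeom : ∑ j ∈ range n, z ^ j = 0) :
    (z - 1) * ∑ j ∈ range n, (j : R) * z ^ j = n := by
  simp [sub_one_mul_sum_range_mul_pow, hzn, hgeom]

theorem sq_sub_one_mul_sum_range_mul_sub_mul_pow {R : Type*} [CommRing R] {z : R} {n : ℕ}
    (hzn : z ^ n = 1) (hgeom : ∑ j ∈ range n, z ^ j = 0) :
    (z - 1) ^ 2 * ∑ j ∈ range n, (j : R) * (n - j) * z ^ j = 2 * n * z := by
  have hdiff : ∀ j : ℕ, ((j + 1 : ℕ) : R) * (n - (j + 1 : ℕ)) - j * (n - j)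
      = n - 1 - 2 * j := fun j => by push_cast; ring
  calc (z - 1) ^ 2 * ∑ j ∈ range n, (j : R) * (n - j) * z ^ j
      = (z - 1) * (-z * ∑ j ∈ range n, (n - 1 - 2 * j) * z ^ j) := by
        rw [sq, mul_assoc, sub_one_mul_sum_range_mul_pow (fun j : ℕ => (j : R) * (n - j))]
        simp only [hdiff]
        simp
    _ = 2 * z * ((z - 1) * ∑ j ∈ range n, (j : R) * z ^ j) := by
        simp only [sub_mul, sum_sub_distrib, mul_assoc, ← mul_sum, hgeom]
        ring
    _ = 2 * n * z := by rw [sub_one_mul_sum_range_id_mul_pow hzn hgeom]; ring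

theorem sum_range_mul_sub {K : Type*} [Field K] [CharZero K] (n : ℕ) :
    ∑ j ∈ range n, (j : K) * (n - j) = n * (n ^ 2 - 1) / 6 := by
  have hgauss : ∀ m : ℕ, ∑ j ∈ range m, (j : K) = m * (m - 1) / 2 := by
    intro m
    induction m with
    | zero => simp
    | succ m ih => rw [sum_range_succ, ih]; push_cast; ring
  induction n with
  | zero => simp
  | succ n ih =>
    have hsplit : ∀ j : ℕ, (j : K) * ((n + 1 : ℕ) - j) = j * (n - j) + j := fun j => by
      push_cast; ring
    rw [sum_range_succ, sum_congr rfl fun j _ => hsplit j, sum_add_distrib, ih, hgauss]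
    push_cast
    ring

theorem geom_sum_eq_zero_of_pow_eq_one {K : Type*} [DivisionRing K] {z : K} {n : ℕ}
    (hzn : z ^ n = 1) (hz : z ≠ 1) : ∑ j ∈ range n, z ^ j = 0 := by
  rw [geom_sum_eq hz, hzn, sub_self, zero_div]

theorem IsPrimitiveRoot.geom_sum_pow_eq_zero {K : Type*} [Field K] {ζ : K} {n j : ℕ}
    (hζ : IsPrimitiveRoot ζ n) (hj0 : 0 < j) (hj : j < n) :
    ∑ l ∈ range n, (ζ ^ j) ^ l = 0 := by
  refine geom_sum_eq_zero_of_pow_eq_one ?_ (hζ.pow_ne_one_of_pos_of_lt hj0.ne' hj)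
  rw [pow_right_comm, hζ.pow_eq_one, one_pow]

theorem exp_two_mul_I_sub_one_sq (t : ℂ) :
    (exp (2 * t * I) - 1) ^ 2 = -4 * exp (2 * t * I) * sin t ^ 2 := by
  have hw : exp (t * I) ≠ 0 := exp_ne_zero _
  have h2 : exp (2 * t * I) = exp (t * I) ^ 2 := by rw [← exp_nat_mul]; ring_nf
  have hneg : exp (-t * I) = (exp (t * I))⁻¹ := by rw [← exp_neg]; ring_nf
  rw [sin, h2, hneg]
  field_simp
  ring_nf
  rw [I_sq]
  ring

theorem inv_sin_sq_eq_neg_sum (n l : ℕ) (hl : 0 < l) (hln : l < n) :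
    1 / sin ((l : ℂ) * π / n) ^ 2
      = -(2 / n) * ∑ j ∈ range n, (j : ℂ) * (n - j) * (exp (2 * π * I / n) ^ l) ^ j := by
  set ζ := exp (2 * π * I / n) with hζdef
  have hζ : IsPrimitiveRoot ζ n := isPrimitiveRoot_exp n (by omega)
  set z := ζ ^ l with hzdef
  have hz0 : z ≠ 0 := pow_ne_zero _ (exp_ne_zero _)
  have hz1 : z ≠ 1 := hζ.pow_ne_one_of_pos_of_lt hl.ne' hln
  have hzn : z ^ n = 1 := by rw [pow_right_comm, hζ.pow_eq_one, one_pow]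
  have hsin := exp_two_mul_I_sub_one_sq (l * π / n)
  rw [show exp (2 * ((l : ℂ) * π / n) * I) = z by rw [hzdef, hζdef, ← exp_nat_mul]; ring_nf]
    at hsin
  have hs : sin ((l : ℂ) * π / n) ≠ 0 := by
    intro h
    rw [h] at hsin
    exact hz1 (sub_eq_zero.mp (pow_eq_zero_iff two_ne_zero |>.mp (by simpa using hsin)))
  have hF := sq_sub_one_mul_sum_range_mul_sub_mul_pow hzn (geom_sum_eq_zero_of_pow_eq_one hzn hz1)
  rw [hsin] at hF
  have hn : (n : ℂ) ≠ 0 := by exact_mod_cast (show n ≠ 0 by omega)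
  field_simp
  refine mul_left_cancel₀ (mul_ne_zero two_ne_zero hz0) ?_
  linear_combination -hF

theorem inv_sin_sq_sum (b : ℕ) (hb : 2 ≤ b) :
    ∑ l ∈ Finset.Icc 1 (b - 1), 1 / (Real.sin ((l : ℝ) * Real.pi / b)) ^ 2
      = ((b : ℝ) ^ 2 - 1) / 3 := by
  have hb0 : (b : ℂ) ≠ 0 := by exact_mod_cast (show b ≠ 0 by omega)
  have hIcc : Icc 1 (b - 1) = Ico 1 b := Icc_sub_one_right_eq_Ico_of_not_isMin (by simp; omega) 1
  rw [← ofReal_inj]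
  push_cast
  rw [sum_congr rfl fun l hl => inv_sin_sq_eq_neg_sum b l (by simp at hl; omega)
    (by simp at hl; omega), ← mul_sum, sum_comm, hIcc]
  set ζ := exp (2 * π * I / b)
  have hvanish : ∑ j ∈ range b, (j : ℂ) * (b - j) * ∑ l ∈ range b, (ζ ^ j) ^ l = 0 := by
    refine sum_eq_zero fun j hj => ?_
    rcases j.eq_zero_or_pos with rfl | hj0
    · simp
    · rw [(isPrimitiveRoot_exp b (by omega)).geom_sum_pow_eq_zero hj0 (mem_range.mp hj), mul_zero]
  calc -(2 / b) * ∑ j ∈ range b, ∑ l ∈ Ico 1 b, (j : ℂ) * (b - j) * (ζ ^ l) ^ j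
      = -(2 / b) * ∑ j ∈ range b, (j : ℂ) * (b - j) * (∑ l ∈ range b, (ζ ^ j) ^ l - 1) := by
        simp only [← mul_sum, pow_right_comm ζ, sum_range_eq_add_Ico _ (by omega : 0 < b),
          pow_zero, add_sub_cancel_left]
    _ = 2 / b * ∑ j ∈ range b, (j : ℂ) * (b - j) := by
        simp only [mul_sub_one, sum_sub_distrib, hvanish]
        ring
    _ = ((b : ℂ) ^ 2 - 1) / 3 := by
        rw [sum_range_mul_sub]
        field_simp
        ring
end

section
/- Let b ≥ 2 and n ≥ 1 be integers. Then Σ over all tuples (t_1,...,t_n) ∈ {0,...,b-1}^n of Σ_{i,j=1}^n b^{i-j} t_i t_j equals (1/4)b^{2n+1} + (n/12)b^{n+2} - (1/2)b^{n+1} - (n/12)b^n + (1/4)b. -/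
/-!
Exchanging the sums reduces everything to the second moments `∑ₜ tᵢ tⱼ` of the digits. Writing the
summand as a product over coordinates shows that they equal `bⁿ⁻¹ ∑ a²` for `i = j` and
`bⁿ⁻² (∑ a)²` for `i ≠ j`. What remains is the weight sum `∑ᵢ ∑ⱼ b^(i-j)`, the product of a
geometric sum in `b` and one in `b⁻¹`, so that `bⁿ (b - 1)² ∑ᵢ ∑ⱼ b^(i-j) = b (bⁿ - 1)²`.
-/

open Finset

section PiSums

variable {ι α R : Type*} [Fintype ι] [DecidableEq ι] [Fintype α] [CommSemiring R]

theorem sum_pi_eval_mul_eval (f g : α → R) (i j : ι) :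
    ∑ t : ι → α, f (t i) * g (t j) =
      ∏ k, ∑ a, (if k = i then f a else 1) * (if k = j then g a else 1) := by
  rw [Fintype.prod_sum]
  refine sum_congr rfl fun t _ => ?_
  rw [prod_mul_distrib, Fintype.prod_ite_eq', Fintype.prod_ite_eq']

/- The moment identities are multiplied by `card α`, resp. `card α ^ 2`, to avoid the truncated
exponents `card ι - 1` and `card ι - 2`. -/
theorem card_mul_sum_pi_eval_mul_eval_self (f g : α → R) (i : ι) :
    Fintype.card α * ∑ t : ι → α, f (t i) * g (t i) =
      Fintype.card α ^ Fintype.card ι * ∑ a, f a * g a := by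
  rw [sum_pi_eval_mul_eval, Fintype.prod_eq_mul_prod_compl i]
  have hcompl : ∀ k ∈ ({i}ᶜ : Finset ι),
      ∑ a, (if k = i then f a else 1) * (if k = i then g a else 1) = (Fintype.card α : R) := by
    intro k hk
    have hki : k ≠ i := by simpa using hk
    simp [hki]
  simp only [if_true]
  obtain ⟨m, hm⟩ := Nat.exists_eq_add_of_le' (Fintype.card_pos_iff.mpr ⟨i⟩)
  rw [prod_congr rfl hcompl, prod_const, card_compl, card_singleton, hm, Nat.add_sub_cancel,
    pow_succ]
  ring

theorem card_sq_mul_sum_pi_eval_mul_eval_of_ne (f g : α → R) {i j : ι} (hij : i ≠ j) :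
    Fintype.card α ^ 2 * ∑ t : ι → α, f (t i) * g (t j) =
      Fintype.card α ^ Fintype.card ι * (∑ a, f a) * ∑ a, g a := by
  rw [sum_pi_eval_mul_eval, ← prod_mul_prod_compl {i, j}, prod_pair hij]
  have hcompl : ∀ k ∈ ({i, j}ᶜ : Finset ι),
      ∑ a, (if k = i then f a else 1) * (if k = j then g a else 1) = (Fintype.card α : R) := by
    intro k hk
    simp only [mem_compl, mem_insert, mem_singleton, not_or] at hk
    simp [hk.1, hk.2]
  obtain ⟨m, hm⟩ := Nat.exists_eq_add_of_le' (Fintype.one_lt_card_iff.mpr ⟨i, j, hij⟩)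
  rw [prod_congr rfl hcompl, prod_const, card_compl, card_pair hij, hm, Nat.add_sub_cancel,
    pow_add]
  simp only [if_true, if_neg hij, if_neg hij.symm, mul_one, one_mul]
  ring

theorem card_sq_mul_sum_pi_eval_mul_eval (f g : α → R) (i j : ι) :
    Fintype.card α ^ 2 * ∑ t : ι → α, f (t i) * g (t j) =
      if i = j then Fintype.card α ^ (Fintype.card ι + 1) * ∑ a, f a * g a
      else Fintype.card α ^ Fintype.card ι * (∑ a, f a) * ∑ a, g a := by
  split_ifs with hij
  · subst hij
    rw [sq, mul_assoc, card_mul_sum_pi_eval_mul_eval_self, pow_succ]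
    ring
  · exact card_sq_mul_sum_pi_eval_mul_eval_of_ne f g hij

end PiSums

theorem sum_fin_val_mul_two {R : Type*} [CommRing R] (m : ℕ) :
    (∑ a : Fin m, ((a : ℕ) : R)) * 2 = m * (m - 1) := by
  rw [Fin.sum_univ_eq_sum_range (fun a => (a : R))]
  induction m with
  | zero => simp
  | succ m ih => rw [sum_range_succ, add_mul, ih]; push_cast; ring

theorem sum_fin_val_mul_self_mul_six {R : Type*} [CommRing R] (m : ℕ) :
    (∑ a : Fin m, ((a : ℕ) : R) * ((a : ℕ) : R)) * 6 = m * (m - 1) * (2 * m - 1) := by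
  rw [Fin.sum_univ_eq_sum_range (fun a => (a : R) * (a : R))]
  induction m with
  | zero => simp
  | succ m ih => rw [sum_range_succ, add_mul, ih]; push_cast; ring

theorem sum_sum_mul_ite_eq {ι R : Type*} [Fintype ι] [DecidableEq ι] [CommRing R]
    (w : ι → ι → R) (p q : R) :
    ∑ i, ∑ j, w i j * (if i = j then p else q) =
      q * ∑ i, ∑ j, w i j + (p - q) * ∑ i, w i i := by
  have hsplit (i j : ι) : w i j * (if i = j then p else q) =
      q * w i j + if i = j then (p - q) * w i i else 0 := by
    split_ifs with h
    · subst h; ring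
    · ring
  simp only [hsplit, sum_add_distrib, ← mul_sum, Fintype.sum_ite_eq]

theorem pow_mul_sub_one_sq_mul_sum_sum_zpow {K : Type*} [Field K] {x : K} (hx : x ≠ 0) (n : ℕ) :
    x ^ n * (x - 1) ^ 2 * ∑ i : Fin n, ∑ j : Fin n, x ^ ((i : ℤ) - (j : ℤ)) =
      x * (x ^ n - 1) ^ 2 := by
  have hsplit : ∑ i : Fin n, ∑ j : Fin n, x ^ ((i : ℤ) - (j : ℤ)) =
      (∑ i ∈ range n, x ^ i) * ∑ j ∈ range n, x⁻¹ ^ j := by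
    rw [← Fin.sum_univ_eq_sum_range (x ^ ·), ← Fin.sum_univ_eq_sum_range (x⁻¹ ^ ·), sum_mul_sum]
    simp only [zpow_sub₀ hx, zpow_natCast, inv_pow, div_eq_mul_inv]
  have hinv : x ^ n * (x - 1) * ∑ j ∈ range n, x⁻¹ ^ j = x * (x ^ n - 1) := by
    have hinv_one : x * x⁻¹ = 1 := mul_inv_cancel₀ hx
    have hinv_pow : x ^ n * x⁻¹ ^ n = 1 := by rw [← mul_pow, hinv_one, one_pow]
    linear_combination (-(x ^ n * x)) * geom_sum_mul x⁻¹ n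
      + x ^ n * (∑ j ∈ range n, x⁻¹ ^ j) * hinv_one - x * hinv_pow
  rw [hsplit]
  linear_combination (x ^ n - 1) * hinv
    + x ^ n * (x - 1) * (∑ j ∈ range n, x⁻¹ ^ j) * geom_sum_mul x n

theorem sum_digits_zeta_general (b n : ℕ) (hb : 2 ≤ b) :
    ∑ t : Fin n → Fin b, ∑ i : Fin n, ∑ j : Fin n,
        (b : ℝ) ^ (((i : ℕ) : ℤ) - ((j : ℕ) : ℤ)) * ((t i : ℕ) : ℝ) * ((t j : ℕ) : ℝ)
      = (b : ℝ) ^ (2 * n + 1) / 4 + (n : ℝ) * (b : ℝ) ^ (n + 2) / 12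
        - (b : ℝ) ^ (n + 1) / 2 - (n : ℝ) * (b : ℝ) ^ n / 12 + (b : ℝ) / 4 := by
  have hb₀ : (b : ℝ) ≠ 0 := Nat.cast_ne_zero.mpr (by omega)
  have hmoment := card_sq_mul_sum_pi_eval_mul_eval (ι := Fin n) (fun a : Fin b => ((a : ℕ) : ℝ))
    (fun a => a)
  simp only [Fintype.card_fin] at hmoment
  have hS₁ := sum_fin_val_mul_two (R := ℝ) b
  have hS₂ := sum_fin_val_mul_self_mul_six (R := ℝ) b
  have hW := pow_mul_sub_one_sq_mul_sum_sum_zpow hb₀ n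
  set S₁ := ∑ a : Fin b, ((a : ℕ) : ℝ)
  set S₂ := ∑ a : Fin b, ((a : ℕ) : ℝ) * ((a : ℕ) : ℝ)
  set W := ∑ i : Fin n, ∑ j : Fin n, (b : ℝ) ^ (((i : ℕ) : ℤ) - ((j : ℕ) : ℤ))
  apply mul_left_cancel₀ (pow_ne_zero 2 hb₀)
  calc (b : ℝ) ^ 2 * ∑ t : Fin n → Fin b, ∑ i : Fin n, ∑ j : Fin n,
        (b : ℝ) ^ (((i : ℕ) : ℤ) - ((j : ℕ) : ℤ)) * ((t i : ℕ) : ℝ) * ((t j : ℕ) : ℝ)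
      = ∑ i : Fin n, ∑ j : Fin n, (b : ℝ) ^ (((i : ℕ) : ℤ) - ((j : ℕ) : ℤ)) *
          ((b : ℝ) ^ 2 * ∑ t : Fin n → Fin b, ((t i : ℕ) : ℝ) * ((t j : ℕ) : ℝ)) := by
        simp only [mul_sum]
        rw [sum_comm]
        refine sum_congr rfl fun i _ => ?_
        rw [sum_comm]
        exact sum_congr rfl fun j _ => sum_congr rfl fun t _ => by ring
    _ = (b : ℝ) ^ n * S₁ * S₁ * W + ((b : ℝ) ^ (n + 1) * S₂ - (b : ℝ) ^ n * S₁ * S₁) * n := by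
        simp only [hmoment, sum_sum_mul_ite_eq, sub_self, zpow_zero, sum_const, card_univ,
          Fintype.card_fin, nsmul_eq_mul, mul_one, W]
    _ = _ := by
        linear_combination ((b : ℝ) ^ n * W - n * (b : ℝ) ^ n) / 4 * (2 * S₁ + b * (b - 1)) * hS₁
          + (b : ℝ) ^ 2 / 4 * hW + n * (b : ℝ) ^ (n + 1) / 6 * hS₂

theorem sum_digits_zeta (b n : ℕ) (hb : 2 ≤ b) (hn : 1 ≤ n) :
    ∑ t : Fin n → Fin b, ∑ i : Fin n, ∑ j : Fin n,
        (b : ℝ) ^ (((i : ℕ) : ℤ) - ((j : ℕ) : ℤ)) * ((t i : ℕ) : ℝ) * ((t j : ℕ) : ℝ)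
      = (b : ℝ) ^ (2 * n + 1) / 4 + (n : ℝ) * (b : ℝ) ^ (n + 2) / 12
        - (b : ℝ) ^ (n + 1) / 2 - (n : ℝ) * (b : ℝ) ^ n / 12 + (b : ℝ) / 4 :=
  sum_digits_zeta_general b n hb
end

section
/- Let b ≥ 2 and n ≥ 1 be integers, let 0 ≤ a ≤ n, and define s_i = t_i for 1 ≤ i ≤ a and s_i = b - 1 - t_i for a < i ≤ n. Then Σ over all tuples (t_1,...,t_n) ∈ {0,...,b-1}^n of Σ_{i,j=1}^n b^{i-j} t_i s_j equals (1/4)b^{2n+1} - (1/2)b^{n+1} + (1/4)b + (2a - n)·((b²-1)/12)·b^n. -/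
/-!
Think of the digits `t_i` as independent and uniform on `{0, …, b-1}`, with mean
`μ = (b-1)/2` and variance `(b²-1)/12`. Writing `t = μ + c` with `c` the centered digit, the
reflected digit is `b - 1 - t = μ - c`, so `s_j = μ ± c(t_j)`. Centered digits sum to zero and
are uncorrelated at distinct positions, hence `∑_t t_i s_j = b^n (μ² ± δ_ij (b²-1)/12)`. The
constant part produces the double geometric sum `∑_{i,j} b^{i-j} = b(b^n-1)²/((b-1)² b^n)`,
and the diagonal part counts `a` signs `+` against `n - a` signs `-`.
-/

open Finset

section
variable {ι α R : Type*} [Fintype ι] [DecidableEq ι] [Fintype α] [CommSemiring R]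

theorem Fintype.sum_pi_apply (i : ι) (f : α → R) :
    ∑ t : ι → α, f (t i) = Fintype.card α ^ (Fintype.card ι - 1) * ∑ x, f x := by
  rw [← Fintype.sum_equiv (Equiv.piSplitAt i fun _ => α).symm _ _ (fun _ => rfl)]
  simp [Fintype.sum_prod_type, Fintype.card_subtype_compl, Finset.mul_sum]

theorem Fintype.sum_pi_apply_mul_apply_eq_zero {i j : ι} (hij : i ≠ j) {f : α → R}
    (hf : ∑ x, f x = 0) (g : α → R) : ∑ t : ι → α, f (t i) * g (t j) = 0 := by
  rw [← Fintype.sum_equiv (Equiv.piSplitAt i fun _ => α).symm _ _ (fun _ => rfl)]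
  simp [Fintype.sum_prod_type, Finset.sum_comm (γ := α), ← Finset.sum_mul, hij.symm, hf]
end

theorem sum_range_natCast (n : ℕ) : ∑ x ∈ range n, (x : ℝ) = n * (n - 1) / 2 := by
  induction n with
  | zero => simp
  | succ n ih => rw [sum_range_succ, ih]; push_cast; ring

theorem sum_range_natCast_sq (n : ℕ) :
    ∑ x ∈ range n, (x : ℝ) ^ 2 = n * (n - 1) * (2 * n - 1) / 6 := by
  induction n with
  | zero => simp
  | succ n ih => rw [sum_range_succ, ih]; push_cast; ring

noncomputable def centeredDigit (b : ℕ) (x : Fin b) : ℝ := (x : ℕ) - ((b : ℝ) - 1) / 2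

theorem ite_digit_eq_add_mul_centeredDigit {b : ℕ} (p : Prop) [Decidable p] (x : Fin b) :
    (if p then ((x : ℕ) : ℝ) else (b : ℝ) - 1 - ((x : ℕ) : ℝ)) =
      ((b : ℝ) - 1) / 2 + (if p then 1 else -1) * centeredDigit b x := by
  unfold centeredDigit
  split_ifs <;> ring

theorem sum_centeredDigit (b : ℕ) : ∑ x, centeredDigit b x = 0 := by
  unfold centeredDigit
  rw [Fin.sum_univ_eq_sum_range (fun x : ℕ => (x : ℝ) - ((b : ℝ) - 1) / 2), sum_sub_distrib,
    sum_range_natCast]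
  simp only [sum_const, card_range, nsmul_eq_mul]
  ring

theorem sum_centeredDigit_sq (b : ℕ) :
    ∑ x, centeredDigit b x ^ 2 = (b : ℝ) * ((b : ℝ) ^ 2 - 1) / 12 := by
  unfold centeredDigit
  rw [Fin.sum_univ_eq_sum_range (fun x : ℕ => ((x : ℝ) - ((b : ℝ) - 1) / 2) ^ 2)]
  simp only [sub_sq, sum_add_distrib, sum_sub_distrib, ← sum_mul, ← mul_sum, sum_range_natCast,
    sum_range_natCast_sq, sum_const, card_range, nsmul_eq_mul]
  ring

section
variable {b n : ℕ}

theorem sum_pi_centeredDigit (i : Fin n) : ∑ t : Fin n → Fin b, centeredDigit b (t i) = 0 := by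
  rw [Fintype.sum_pi_apply, sum_centeredDigit, mul_zero]

theorem sum_pi_centeredDigit_mul (i j : Fin n) :
    ∑ t : Fin n → Fin b, centeredDigit b (t i) * centeredDigit b (t j) =
      if i = j then (b : ℝ) ^ n * ((b : ℝ) ^ 2 - 1) / 12 else 0 := by
  split_ifs with hij
  · subst hij
    simp only [← sq]
    rw [Fintype.sum_pi_apply (f := fun x => centeredDigit b x ^ 2), sum_centeredDigit_sq,
      Fintype.card_fin, Fintype.card_fin, ← pow_sub_one_mul i.pos.ne' (b : ℝ)]
    ring
  · exact Fintype.sum_pi_apply_mul_apply_eq_zero hij (sum_centeredDigit b) _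

theorem sum_pi_digit_mul_affine_centeredDigit (i j : Fin n) (ε : ℝ) :
    ∑ t : Fin n → Fin b,
        ((t i : ℕ) : ℝ) * (((b : ℝ) - 1) / 2 + ε * centeredDigit b (t j)) =
      (b : ℝ) ^ n * (((b : ℝ) - 1) / 2) ^ 2 +
        if i = j then ε * ((b : ℝ) ^ n * ((b : ℝ) ^ 2 - 1) / 12) else 0 := by
  have hdigit (x : Fin b) : ((x : ℕ) : ℝ) = ((b : ℝ) - 1) / 2 + centeredDigit b x := by
    rw [centeredDigit]; ring
  have hexpand (u v : ℝ) : (((b : ℝ) - 1) / 2 + u) * (((b : ℝ) - 1) / 2 + ε * v) =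
      (((b : ℝ) - 1) / 2) ^ 2 + ((b : ℝ) - 1) / 2 * u + ((b : ℝ) - 1) / 2 * ε * v +
        ε * (u * v) := by
    ring
  simp only [hdigit, hexpand, sum_add_distrib, ← mul_sum, sum_pi_centeredDigit,
    sum_pi_centeredDigit_mul, sum_const, card_univ, Fintype.card_pi, Fintype.card_fin, prod_const]
  simp [mul_ite]
end

theorem sum_ite_succ_le_one_neg_one {a n : ℕ} (ha : a ≤ n) :
    ∑ j : Fin n, (if (j : ℕ) + 1 ≤ a then (1 : ℝ) else -1) = 2 * a - n := by
  obtain ⟨k, rfl⟩ := Nat.exists_eq_add_of_le ha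
  rw [Fin.sum_univ_eq_sum_range (fun j => if j + 1 ≤ a then (1 : ℝ) else -1), sum_range_add,
    sum_ite_of_true (p := fun x => x + 1 ≤ a) fun x hx => mem_range.1 hx,
    sum_ite_of_false fun x _ => by omega]
  simp only [sum_const, card_range, nsmul_eq_mul, mul_one, Nat.cast_add]
  ring

theorem sum_sum_zpow_sub_mul_pow {K : Type*} [Field K] {x : K} (hx : x ≠ 0) (n : ℕ) :
    (∑ i : Fin n, ∑ j : Fin n, x ^ ((i : ℤ) - j)) * x ^ n =
      x * (∑ i : Fin n, x ^ (i : ℕ)) ^ 2 := by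
  have hrev (i j : Fin n) :
      x ^ ((i : ℤ) - (Fin.rev j : ℕ)) * x ^ n = x * (x ^ (i : ℕ) * x ^ (j : ℕ)) := by
    rw [Fin.val_rev, ← zpow_natCast, ← zpow_natCast, ← zpow_natCast, ← zpow_add₀ hx,
      ← zpow_add₀ hx, ← zpow_one_add₀ hx]
    congr 1
    push_cast [Nat.sub_sub, show (j : ℕ) + 1 ≤ n from j.isLt]
    ring
  simp_rw [sq, sum_mul_sum, mul_sum, sum_mul]
  refine sum_congr rfl fun i _ => ?_
  rw [← Equiv.sum_comp (Fin.revPerm (n := n))]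
  simp only [Fin.revPerm_apply, hrev]

theorem sub_one_sq_mul_pow_mul_sum_sum_zpow_sub {K : Type*} [Field K] {x : K} (hx : x ≠ 0)
    (n : ℕ) : (x - 1) ^ 2 * x ^ n * ∑ i : Fin n, ∑ j : Fin n, x ^ ((i : ℤ) - j) =
      x * (x ^ n - 1) ^ 2 := by
  rw [mul_assoc, mul_comm (x ^ n), sum_sum_zpow_sub_mul_pow hx,
    Fin.sum_univ_eq_sum_range (fun i => x ^ i), ← geom_sum_mul]
  ring

theorem sum_digits_hammersley_general (b n a : ℕ) (hb : 2 ≤ b) (ha : a ≤ n) :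
    ∑ t : Fin n → Fin b, ∑ i : Fin n, ∑ j : Fin n,
        (b : ℝ) ^ (((i : ℕ) : ℤ) - ((j : ℕ) : ℤ)) * ((t i : ℕ) : ℝ) *
          (if (j : ℕ) + 1 ≤ a then ((t j : ℕ) : ℝ) else (b : ℝ) - 1 - ((t j : ℕ) : ℝ))
      = (b : ℝ) ^ (2 * n + 1) / 4 - (b : ℝ) ^ (n + 1) / 2 + (b : ℝ) / 4
        + (2 * (a : ℝ) - (n : ℝ)) * (((b : ℝ) ^ 2 - 1) / 12) * (b : ℝ) ^ n := by
  have hb0 : (b : ℝ) ≠ 0 := Nat.cast_ne_zero.2 (by omega)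
  set ε : Fin n → ℝ := fun j => if (j : ℕ) + 1 ≤ a then 1 else -1
  calc _ = ∑ i : Fin n, ∑ j : Fin n, (b : ℝ) ^ ((i : ℤ) - j) * ∑ t : Fin n → Fin b,
          ((t i : ℕ) : ℝ) * (((b : ℝ) - 1) / 2 + ε j * centeredDigit b (t j)) := by
        simp_rw [ite_digit_eq_add_mul_centeredDigit, mul_sum, mul_assoc]
        rw [sum_comm]
        exact sum_congr rfl fun i _ => sum_comm
    _ = (b : ℝ) ^ n * (((b : ℝ) - 1) / 2) ^ 2 *
            ∑ i : Fin n, ∑ j : Fin n, (b : ℝ) ^ ((i : ℤ) - j)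
          + (b : ℝ) ^ n * ((b : ℝ) ^ 2 - 1) / 12 * ∑ j, ε j := by
        simp_rw [sum_pi_digit_mul_affine_centeredDigit, mul_add, sum_add_distrib, mul_sum]
        simp [mul_ite, mul_comm]
    _ = _ := by
        rw [sum_ite_succ_le_one_neg_one ha]
        linear_combination (1 / 4 : ℝ) * sub_one_sq_mul_pow_mul_sum_sum_zpow_sub hb0 n

theorem sum_digits_hammersley (b n a : ℕ) (hb : 2 ≤ b) (hn : 1 ≤ n) (ha : a ≤ n) :
    ∑ t : Fin n → Fin b, ∑ i : Fin n, ∑ j : Fin n,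
        (b : ℝ) ^ (((i : ℕ) : ℤ) - ((j : ℕ) : ℤ)) * ((t i : ℕ) : ℝ) *
          (if (j : ℕ) + 1 ≤ a then ((t j : ℕ) : ℝ) else (b : ℝ) - 1 - ((t j : ℕ) : ℝ))
      = (b : ℝ) ^ (2 * n + 1) / 4 - (b : ℝ) ^ (n + 1) / 2 + (b : ℝ) / 4
        + (2 * (a : ℝ) - (n : ℝ)) * (((b : ℝ) ^ 2 - 1) / 12) * (b : ℝ) ^ n :=
  sum_digits_hammersley_general b n a hb ha
end
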